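/- Let D be a positive integer and 0 ≤ i, j ≤ D integers with i + j ≤ D. Then ₄F₃[−i, −i, −j, −j; −D−i−j−1, D−i−j+1, 1; 1] = ((−D−i−1)_i (D−i+1)_i)/((−D−i−j−1)_i (D−i−j+1)_i) · ₄F₃[−i, i+1, −j, j+1; 1, D+2, −D; 1]. -/
import Mathlib


/-- Pochhammer symbol `(a)_n`. -/
noncomputable def poch (a : ℝ) (n : ℕ) : ℝ := ∏ k ∈ Finset.range n, (a + k)

open Finset
set_option maxHeartbeats 1600000

lemma poch_zero (a : ℝ) : poch a 0 = 1 := by simp [poch]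

lemma poch_succ (a : ℝ) (n : ℕ) : poch a (n+1) = poch a n * (a + n) := by
  simp [poch, Finset.prod_range_succ]

lemma poch_succ' (a : ℝ) (n : ℕ) : poch a (n+1) = a * poch (a+1) n := by
  simp [poch, Finset.prod_range_succ']
  rw [mul_comm]
  congr 1
  apply Finset.prod_congr rfl
  intro k _
  push_cast
  ring

lemma poch_ne_zero {a : ℝ} {n : ℕ} (h : ∀ t : ℕ, t < n → a + t ≠ 0) : poch a n ≠ 0 := by
  apply Finset.prod_ne_zero_iff.mpr
  intro t ht
  exact h t (Finset.mem_range.mp ht)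

lemma poch_pos {a : ℝ} (ha : 0 < a) (n : ℕ) : 0 < poch a n := by
  apply Finset.prod_pos
  intro t _
  positivity

lemma poch_param_succ (e : ℝ) (k : ℕ) : poch e k * (e + k) = e * poch (e+1) k := by
  rw [← poch_succ, poch_succ']

lemma poch_neg_nat_zero {k m : ℕ} (h : k < m) : poch (-(k:ℝ)) m = 0 := by
  apply Finset.prod_eq_zero (Finset.mem_range.mpr h)
  simp

lemma poch_split (a : ℝ) (m p : ℕ) : poch a (m+p) = poch a m * poch (a + m) p := by
  rw [poch, poch, poch, Finset.prod_range_add]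
  congr 1
  apply Finset.prod_congr rfl
  intro k _
  push_cast
  ring

lemma poch_reflect (a : ℝ) (n : ℕ) : poch a n = (-1)^n * poch (1 - a - n) n := by
  rw [poch, poch, ← Finset.prod_range_reflect]
  rw [show ((-1:ℝ))^n = ∏ _k ∈ Finset.range n, (-1:ℝ) by simp, ← Finset.prod_mul_distrib]
  apply Finset.prod_congr rfl
  intro j hj
  have hj' := Finset.mem_range.mp hj
  have hc : ((n - 1 - j : ℕ) : ℝ) = (n:ℝ) - 1 - j := by
    have h1 : n - 1 - j = n - (1 + j) := by omega
    rw [h1, Nat.cast_sub (by omega : 1 + j ≤ n)]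
    push_cast; ring
  rw [hc]; ring

lemma poch_cast_succ (A : ℕ) (n : ℕ) : poch ((A:ℝ)+1) n * (A.factorial:ℝ) = ((A+n).factorial : ℝ) := by
  induction n with
  | zero => simp [poch_zero]
  | succ n ih =>
    rw [poch_succ, mul_assoc, mul_comm ((A:ℝ)+1+n), ← mul_assoc, ih,
        show A + (n+1) = (A+n)+1 from rfl, Nat.factorial_succ]
    push_cast; ring

lemma poch_one (n : ℕ) : poch 1 n = n.factorial := by
  have := poch_cast_succ 0 n
  simpa using this

lemma poch_neg_nat {m k : ℕ} (h : m ≤ k) :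
    poch (-(k:ℝ)) m * ((k-m).factorial : ℝ) = (-1)^m * (k.factorial : ℝ) := by
  rw [poch_reflect]
  have harg : (1 - -(k:ℝ) - m) = ((k-m:ℕ):ℝ) + 1 := by
    rw [Nat.cast_sub h]; ring
  rw [harg, mul_assoc, poch_cast_succ, Nat.sub_add_cancel h]


-- pointwise WZ-certificate identity for the Saalschütz recurrence
lemma saal_tele (x y z : ℝ) (N k : ℕ) (hk : k ≤ N + 1)
    (hz : ∀ t : ℕ, z + t ≠ 0)
    (huk : ∀ t : ℕ, t ≤ N + 1 → x + y - z - N + t ≠ 0) :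
    (z+N)*(z-x-y+N) *
        (poch (-(N:ℝ)-1) k * poch x k * poch y k /
          (poch z k * poch (x+y-z-N) k * k.factorial))
      - (z-x+N)*(z-y+N) *
        (poch (-(N:ℝ)) k * poch x k * poch y k /
          (poch z k * poch (x+y+1-z-N) k * k.factorial))
      = (x+y-z-N) * ((k:ℝ)+1) * (((k:ℝ)+1)+z-1)/((N:ℝ)+1) *
        (poch (-(N:ℝ)-1) (k+1) * poch x (k+1) * poch y (k+1) /
          (poch z (k+1) * poch (x+y-z-N) (k+1) * (k+1).factorial))
      - (x+y-z-N) * (k:ℝ) * ((k:ℝ)+z-1)/((N:ℝ)+1) *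
        (poch (-(N:ℝ)-1) k * poch x k * poch y k /
          (poch z k * poch (x+y-z-N) k * k.factorial)) := by
  have hu0 : x + y - z - (N:ℝ) ≠ 0 := by simpa using huk 0 (by omega)
  have hukk : x + y - z - (N:ℝ) + k ≠ 0 := huk k hk
  have hzk : z + (k:ℝ) ≠ 0 := hz k
  have hPz : poch z k ≠ 0 := poch_ne_zero (fun t _ => hz t)
  have hPu : poch (x+y-z-N) k ≠ 0 :=
    poch_ne_zero (fun t ht => huk t (by omega))
  have hfac : (k.factorial : ℝ) ≠ 0 := by exact_mod_cast k.factorial_ne_zero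
  have hN1 : ((N:ℝ)+1) ≠ 0 := by positivity
  have hNm1 : (-(N:ℝ)-1) ≠ 0 := by
    intro h; apply hN1; linarith
  have e0 : poch (-(N:ℝ)) k = poch (-(N:ℝ)-1) k * ((-(N:ℝ)-1) + k) / (-(N:ℝ)-1) := by
    rw [eq_div_iff hNm1]
    have h := poch_param_succ (-(N:ℝ)-1) k
    rw [show -(N:ℝ)-1+1 = -(N:ℝ) by ring] at h
    linarith [h]
  have eW : poch (x+y+1-z-N) k
      = poch (x+y-z-N) k * ((x+y-z-N)+(k:ℝ)) / (x+y-z-N) := by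
    rw [eq_div_iff hu0]
    have h := poch_param_succ (x+y-z-(N:ℝ)) k
    rw [show x+y-z-(N:ℝ)+1 = x+y+1-z-N by ring] at h
    linarith [h]
  rw [e0, eW, poch_succ (-(N:ℝ)-1) k, poch_succ x k, poch_succ y k, poch_succ z k,
      poch_succ (x+y-z-(N:ℝ)) k, Nat.factorial_succ]
  push_cast
  field_simp
  ring

lemma saal (x y z : ℝ) (N : ℕ)
    (hz : ∀ t : ℕ, z + t ≠ 0)
    (hu : ∀ s : ℤ, -(N:ℤ) ≤ s → s ≤ 1 → x + y - z + s ≠ 0) :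
    ∑ k ∈ Finset.range (N+1),
        poch (-(N:ℝ)) k * poch x k * poch y k /
          (poch z k * poch (x + y + 1 - z - N) k * k.factorial)
      = poch (z-x) N * poch (z-y) N / (poch z N * poch (z-x-y) N) := by
  induction N with
  | zero => simp [poch_zero]
  | succ N ih =>
    have hu' : ∀ s : ℤ, -(N:ℤ) ≤ s → s ≤ 1 → x + y - z + s ≠ 0 := by
      intro s h1 h2; exact hu s (by omega) h2
    have huk : ∀ t : ℕ, t ≤ N+1 → x + y - z - N + t ≠ 0 := by
      intro t ht hc
      refine hu ((t:ℤ) - N) (by omega) (by omega) ?_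
      push_cast
      linarith [hc]
    have hu0 : x + y - z - (N:ℝ) ≠ 0 := by simpa using huk 0 (by omega)
    -- the two term families
    set T1 : ℕ → ℝ := fun k => poch (-(N:ℝ)-1) k * poch x k * poch y k /
        (poch z k * poch (x+y-z-N) k * k.factorial) with hT1
    set T0 : ℕ → ℝ := fun k => poch (-(N:ℝ)) k * poch x k * poch y k /
        (poch z k * poch (x+y+1-z-N) k * k.factorial) with hT0
    set G : ℕ → ℝ := fun k => (x+y-z-N) * (k:ℝ) * ((k:ℝ)+z-1)/((N:ℝ)+1) * T1 k with hG
    have hG0 : G 0 = 0 := by simp [hG]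
    have hGtop : G (N+2) = 0 := by
      have hz1 : poch (-(N:ℝ)-1) (N+2) = 0 := by
        have h := poch_neg_nat_zero (k := N+1) (m := N+2) (by omega)
        rw [show -(((N+1):ℕ):ℝ) = -(N:ℝ)-1 by push_cast; ring] at h
        exact h
      simp [hG, hT1, hz1]
    have tele : ∀ k ∈ Finset.range (N+2),
        (z+N)*(z-x-y+N) * T1 k - (z-x+N)*(z-y+N) * T0 k = G (k+1) - G k := by
      intro k hk
      have hk' : k ≤ N+1 := by
        have := Finset.mem_range.mp hk; omega
      have h := saal_tele x y z N k hk' hz huk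
      simpa [hT1, hT0, hG] using h
    have hsplit : ∑ k ∈ Finset.range (N+2),
        ((z+N)*(z-x-y+N) * T1 k - (z-x+N)*(z-y+N) * T0 k) = 0 := by
      rw [Finset.sum_congr rfl tele, Finset.sum_range_sub, hG0, hGtop, sub_zero]
    have big : (z+N)*(z-x-y+N) * ∑ k ∈ Finset.range (N+2), T1 k
        = (z-x+N)*(z-y+N) * ∑ k ∈ Finset.range (N+2), T0 k := by
      rw [Finset.sum_sub_distrib] at hsplit
      rw [← Finset.mul_sum, ← Finset.mul_sum] at hsplit
      linarith [hsplit]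
    have hT0top : T0 (N+1) = 0 := by
      have h : poch (-(N:ℝ)) (N+1) = 0 := poch_neg_nat_zero (by omega)
      simp [hT0, h]
    have hS0 : ∑ k ∈ Finset.range (N+2), T0 k
        = poch (z-x) N * poch (z-y) N / (poch z N * poch (z-x-y) N) := by
      rw [Finset.sum_range_succ, hT0top, add_zero]
      exact ih hu'
    -- identify goal sum with ∑ T1
    have hgoal : ∑ k ∈ Finset.range (N+1+1),
        poch (-((N+1:ℕ)):ℝ) k * poch x k * poch y k /
          (poch z k * poch (x + y + 1 - z - (N+1:ℕ)) k * k.factorial)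
        = ∑ k ∈ Finset.range (N+2), T1 k := by
      apply Finset.sum_congr rfl
      intro k _
      rw [hT1]
      rw [show -(((N+1):ℕ):ℝ) = -(N:ℝ)-1 by push_cast; ring,
          show x + y + 1 - z - (((N+1):ℕ):ℝ) = x+y-z-N by push_cast; ring]
    push_cast at hgoal ⊢
    rw [hgoal]
    -- nonvanishing for the final algebra
    have hzN : z + (N:ℝ) ≠ 0 := hz N
    have hzxyN : z - x - y + (N:ℝ) ≠ 0 := by
      intro h; apply hu0; linarith
    have hPz : poch z N ≠ 0 := poch_ne_zero (fun t _ => hz t)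
    have hPzxy : poch (z-x-y) N ≠ 0 := by
      apply poch_ne_zero
      intro t ht hc
      refine hu (-(t:ℤ)) (by omega) (by omega) ?_
      push_cast
      linarith [hc]
    rw [poch_succ (z-x) N, poch_succ (z-y) N, poch_succ z N, poch_succ (z-x-y) N]
    have hS1 : ∑ k ∈ Finset.range (N+2), T1 k
        = (z-x+N)*(z-y+N) * (poch (z-x) N * poch (z-y) N /
            (poch z N * poch (z-x-y) N)) / ((z+N)*(z-x-y+N)) := by
      rw [eq_div_iff (by exact mul_ne_zero hzN hzxyN)]
      rw [hS0] at big
      linarith [big]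
    rw [hS1]
    field_simp

lemma sum_tri (f : ℕ → ℕ → ℝ) (n : ℕ) :
    ∑ k ∈ Finset.range (n+1), ∑ m ∈ Finset.range (k+1), f k m
      = ∑ m ∈ Finset.range (n+1), ∑ p ∈ Finset.range (n-m+1), f (m+p) m := by
  induction n with
  | zero => simp
  | succ n ih =>
    rw [Finset.sum_range_succ, ih]
    conv_rhs => rw [Finset.sum_range_succ]
    have hin : ∀ m ∈ Finset.range (n+1),
        ∑ p ∈ Finset.range (n+1-m+1), f (m+p) m
          = (∑ p ∈ Finset.range (n-m+1), f (m+p) m) + f (n+1) m := by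
      intro m hm
      have hm' := Finset.mem_range.mp hm
      rw [show n+1-m+1 = (n-m+1)+1 by omega, Finset.sum_range_succ,
          show m + (n-m+1) = n+1 by omega]
    rw [Finset.sum_congr rfl hin, Finset.sum_add_distrib,
        show n+1-(n+1)+1 = 1 by omega]
    rw [Finset.sum_range_succ (f (n+1)) (n+1)]
    simp
    ring

lemma collapse (w : ℝ) (m p : ℕ) :
    poch w (m+p) * poch (-((m+p : ℕ) : ℝ)) m * (p.factorial : ℝ)
      = poch w p * poch (1 - w - ((m+p:ℕ):ℝ)) m * ((m+p).factorial : ℝ) := by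
  have h1 : poch w (m+p) = poch w p * poch (w+p) m := by
    rw [add_comm m p, poch_split]
  have h2 : poch (-((m+p:ℕ)):ℝ) m * (p.factorial:ℝ) = (-1)^m * ((m+p).factorial : ℝ) := by
    have h := poch_neg_nat (m := m) (k := m+p) (Nat.le_add_right m p)
    rw [show m+p-m = p by omega] at h
    exact h
  have h3 : poch (1 - w - ((m+p:ℕ):ℝ)) m = (-1)^m * poch (w+p) m := by
    have h := poch_reflect (w + p) m
    have harg : (1 : ℝ) - (w + p) - m = 1 - w - ((m+p:ℕ):ℝ) := by push_cast; ring
    rw [harg] at h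
    rw [h]; rw [← mul_assoc, ← mul_pow]
    norm_num
  rw [h1, h3]
  linear_combination (poch w p * poch (w+p) m) * h2

lemma poch_nat_eq (A n : ℕ) : poch ((A:ℝ)+1) n = ((A+n).factorial : ℝ) / (A.factorial : ℝ) := by
  rw [eq_div_iff (by exact_mod_cast A.factorial_ne_zero)]
  exact poch_cast_succ A n

lemma poch_neg_eq {m k : ℕ} (h : m ≤ k) :
    poch (-(k:ℝ)) m = (-1)^m * (k.factorial : ℝ) / ((k-m).factorial : ℝ) := by
  rw [eq_div_iff (by exact_mod_cast (k-m).factorial_ne_zero)]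
  rw [poch_neg_nat h]

lemma poch_pos_ne (a : ℝ) (ha : 0 < a) (n : ℕ) : poch a n ≠ 0 := ne_of_gt (poch_pos ha n)

lemma poch_neg_ne {K : ℕ} {n : ℕ} (h : n ≤ K) : poch (-(K:ℝ)) n ≠ 0 := by
  apply poch_ne_zero
  intro t ht hc
  have : (t:ℝ) = K := by linarith
  have : t = K := by exact_mod_cast this
  omega


/-- Terminating `₄F₃` sum with `N+1` terms. -/
noncomputable def F4gen (α₁ α₂ α₃ α₄ β₁ β₂ β₃ : ℝ) (N : ℕ) : ℝ :=
  ∑ n ∈ Finset.range (N + 1),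
    (poch α₁ n * poch α₂ n * poch α₃ n * poch α₄ n) /
      (poch β₁ n * poch β₂ n * poch β₃ n * (n.factorial : ℝ))

theorem whipple_special (D : ℕ) (hD : 0 < D) (i j : ℕ) (hi : i ≤ D) (hj : j ≤ D)
    (hij : i + j ≤ D) :
    F4gen (-(i : ℝ)) (-(i : ℝ)) (-(j : ℝ)) (-(j : ℝ))
        (-(D : ℝ) - i - j - 1) ((D : ℝ) - i - j + 1) 1 (min i j)
      = (poch (-(D : ℝ) - i - 1) i * poch ((D : ℝ) - i + 1) i) /
          (poch (-(D : ℝ) - i - j - 1) i * poch ((D : ℝ) - i - j + 1) i) *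
        F4gen (-(i : ℝ)) ((i : ℝ) + 1) (-(j : ℝ)) ((j : ℝ) + 1)
          1 ((D : ℝ) + 2) (-(D : ℝ)) (min i j) := by
  -- trivial cases
  by_cases hi0 : i = 0
  · subst hi0
    simp only [Nat.zero_min, F4gen, zero_add, Finset.sum_range_one, poch_zero,
      Nat.cast_zero, Nat.factorial_zero]
    norm_num
  by_cases hj0 : j = 0
  · subst hj0
    have hne : poch (-(D:ℝ) - i - 1) i * poch ((D:ℝ) - i + 1) i ≠ 0 := by
      apply mul_ne_zero
      · apply poch_ne_zero
        intro t ht hc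
        have hiD : (t:ℝ) < i := by exact_mod_cast ht
        nlinarith [Nat.cast_nonneg (α := ℝ) D, Nat.cast_nonneg (α := ℝ) i,
          Nat.cast_nonneg (α := ℝ) t]
      · apply poch_pos_ne
        have : (i:ℝ) ≤ D := by exact_mod_cast hi
        linarith
    simp only [Nat.min_zero, F4gen, zero_add, Finset.sum_range_one, poch_zero,
      Nat.cast_zero, Nat.factorial_zero, sub_zero]
    rw [div_self hne]
    norm_num
  have hi1 : 1 ≤ i := by omega
  have hj1 : 1 ≤ j := by omega
  have hiD : i < D := by omega
  have hjD : j < D := by omega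
  have hfac : ∀ n : ℕ, ((n.factorial : ℝ)) ≠ 0 := fun n => by
    exact_mod_cast n.factorial_ne_zero
  have hp1 : ∀ n : ℕ, poch 1 n ≠ 0 := fun n => poch_pos_ne 1 one_pos n
  have hpD2 : ∀ n : ℕ, poch ((D:ℝ)+2) n ≠ 0 := fun n =>
    poch_pos_ne _ (by positivity) n
  have hpmD : ∀ n : ℕ, n ≤ i → poch (-(D:ℝ)) n ≠ 0 := fun n hn =>
    poch_neg_ne (by omega)
  simp only [F4gen]
  set lt : ℕ → ℝ := fun m => poch (-(i:ℝ)) m * poch (-(i:ℝ)) m * poch (-(j:ℝ)) m * poch (-(j:ℝ)) m /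
      (poch (-(D:ℝ)-i-j-1) m * poch ((D:ℝ)-i-j+1) m * poch 1 m * m.factorial) with hlt
  set rt : ℕ → ℝ := fun k => poch (-(i:ℝ)) k * poch ((i:ℝ)+1) k * poch (-(j:ℝ)) k * poch ((j:ℝ)+1) k /
      (poch 1 k * poch ((D:ℝ)+2) k * poch (-(D:ℝ)) k * k.factorial) with hrt
  have hext : ∀ f : ℕ → ℝ, (∀ n, j < n → f n = 0) →
      ∑ n ∈ Finset.range (min i j + 1), f n = ∑ n ∈ Finset.range (i+1), f n := by
    intro f hf
    apply Finset.sum_subset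
    · intro t ht
      rw [Finset.mem_range] at *
      omega
    · intro t ht hnt
      rw [Finset.mem_range] at ht hnt
      apply hf
      omega
  rw [hext lt (fun n hn => by simp [hlt, poch_neg_nat_zero hn]),
      hext rt (fun n hn => by simp [hrt, poch_neg_nat_zero hn])]
  -- auxiliary term families
  set out : ℕ → ℝ := fun k => poch (-(i:ℝ)) k * poch (-(j:ℝ)) k * poch ((i:ℝ)+j+1) k /
      (poch ((D:ℝ)+2) k * poch (-(D:ℝ)) k * k.factorial) with hout
  set s1 : ℕ → ℕ → ℝ := fun k m => poch (-(k:ℝ)) m * poch (-(j:ℝ)) m * poch (-(i:ℝ)) m /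
      (poch 1 m * poch (-(i:ℝ)-j-k) m * m.factorial) with hs1
  set Am : ℕ → ℝ := fun m => poch (-(i:ℝ)) m * poch (-(i:ℝ)) m * poch (-(j:ℝ)) m * poch (-(j:ℝ)) m /
      (poch ((D:ℝ)+2) m * poch (-(D:ℝ)) m * m.factorial * m.factorial) with hAm
  set t3 : ℕ → ℕ → ℝ := fun m p => poch ((m:ℝ)-i) p * poch ((m:ℝ)-j) p * poch ((i:ℝ)+j+1) p /
      (poch ((D:ℝ)+2+m) p * poch ((m:ℝ)-D) p * p.factorial) with ht3
  set S2 : ℕ → ℝ := fun m => poch ((D:ℝ)+j+2) (i-m) * poch ((D:ℝ)+m-i-j+1) (i-m) /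
      (poch ((D:ℝ)+2+m) (i-m) * poch ((D:ℝ)+1-i) (i-m)) with hS2
  set Cst : ℝ := poch ((D:ℝ)+j+2) i * poch ((j:ℝ)-D) i /
      (poch ((D:ℝ)+2) i * poch (-(D:ℝ)) i) with hCst
  -- Step 1 : rt k = ∑_m out k * s1 k m
  have hstep1 : ∀ k ∈ Finset.range (i+1),
      rt k = ∑ m ∈ Finset.range (k+1), out k * s1 k m := by
    intro k hk
    have hk' : k ≤ i := by rw [Finset.mem_range] at hk; omega
    have hz1 : ∀ t : ℕ, (1:ℝ) + t ≠ 0 := fun t => by positivity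
    have hu1 : ∀ s : ℤ, -(k:ℤ) ≤ s → s ≤ 1 → -(j:ℝ) + -(i:ℝ) - 1 + s ≠ 0 := by
      intro s h1 h2 hc
      have h3 : ((-(j:ℤ) - i - 1 + s : ℤ) : ℝ) = 0 := by push_cast; linarith
      have h4 : (-(j:ℤ) - i - 1 + s) = 0 := by exact_mod_cast h3
      omega
    have hsa := saal (-(j:ℝ)) (-(i:ℝ)) 1 k hz1 hu1
    rw [show (-(j:ℝ)) + (-(i:ℝ)) + 1 - 1 - (k:ℝ) = -(i:ℝ)-(j:ℝ)-(k:ℝ) by ring,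
        show (1:ℝ) - -(j:ℝ) - -(i:ℝ) = (i:ℝ)+(j:ℝ)+1 by ring,
        show (1:ℝ) - -(j:ℝ) = (j:ℝ)+1 by ring,
        show (1:ℝ) - -(i:ℝ) = (i:ℝ)+1 by ring] at hsa
    have hsum : ∑ m ∈ Finset.range (k+1), s1 k m
        = poch ((j:ℝ)+1) k * poch ((i:ℝ)+1) k / (poch 1 k * poch ((i:ℝ)+(j:ℝ)+1) k) := by
      simp only [hs1]
      exact hsa
    rw [← Finset.mul_sum, hsum]
    simp only [hrt, hout]
    have hw : poch ((i:ℝ)+(j:ℝ)+1) k ≠ 0 := poch_pos_ne _ (by positivity) k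
    field_simp [hp1 k, hpD2 k, hpmD k hk', hfac k]
  -- Step 3 : pointwise splitting
  have hstep3 : ∀ m ∈ Finset.range (i+1), ∀ p ∈ Finset.range (i-m+1),
      out (m+p) * s1 (m+p) m = Am m * t3 m p := by
    intro m hm p hp
    rw [Finset.mem_range] at hm hp
    have hm' : m ≤ i := by omega
    have hmp : m + p ≤ i := by omega
    simp only [hout, hs1, hAm, ht3]
    have hnegmp : poch (-((m+p:ℕ):ℝ)) m ≠ 0 := poch_neg_ne (by omega)
    have e1 : poch (-(i:ℝ)) (m+p) = poch (-(i:ℝ)) m * poch ((m:ℝ)-i) p := by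
      rw [poch_split, show -(i:ℝ)+(m:ℝ) = (m:ℝ)-(i:ℝ) by ring]
    have e2 : poch (-(j:ℝ)) (m+p) = poch (-(j:ℝ)) m * poch ((m:ℝ)-j) p := by
      rw [poch_split, show -(j:ℝ)+(m:ℝ) = (m:ℝ)-(j:ℝ) by ring]
    have e3 : poch ((D:ℝ)+2) (m+p) = poch ((D:ℝ)+2) m * poch ((D:ℝ)+2+m) p := by
      rw [poch_split]
    have e4 : poch (-(D:ℝ)) (m+p) = poch (-(D:ℝ)) m * poch ((m:ℝ)-D) p := by
      rw [poch_split, show -(D:ℝ)+(m:ℝ) = (m:ℝ)-(D:ℝ) by ring]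
    have hc := collapse ((i:ℝ)+(j:ℝ)+1) m p
    rw [show (1:ℝ) - ((i:ℝ)+(j:ℝ)+1) - ((m+p:ℕ):ℝ) = -(i:ℝ)-(j:ℝ)-((m+p:ℕ):ℝ) by ring] at hc
    have e6 : poch ((i:ℝ)+(j:ℝ)+1) (m+p)
        = poch ((i:ℝ)+(j:ℝ)+1) p * poch (-(i:ℝ)-(j:ℝ)-((m+p:ℕ):ℝ)) m * ((m+p).factorial : ℝ)
          / (poch (-((m+p:ℕ):ℝ)) m * (p.factorial : ℝ)) := by
      rw [eq_div_iff (mul_ne_zero hnegmp (hfac p))]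
      linarith [hc]
    have hj' : poch (-(i:ℝ)-(j:ℝ)-((m+p:ℕ):ℝ)) m ≠ 0 := by
      apply poch_ne_zero
      intro t ht hcon
      have h1 : (1:ℝ) ≤ i := by exact_mod_cast hi1
      have h2 : (1:ℝ) ≤ j := by exact_mod_cast hj1
      have h3 : (0:ℝ) ≤ ((m+p:ℕ):ℝ) := Nat.cast_nonneg _
      have h4 : (t:ℝ) < m := by
        have : (t:ℝ) < (m:ℝ) := by exact_mod_cast ht
        exact this
      have h5 : (m:ℝ) ≤ ((m+p:ℕ):ℝ) := by exact_mod_cast Nat.le_add_right m p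
      nlinarith
    have hmD : poch ((m:ℝ)-D) p ≠ 0 := by
      apply poch_ne_zero
      intro t ht hcon
      have : ((m+t:ℕ):ℝ) = (D:ℕ) := by push_cast; linarith
      have : m + t = D := by exact_mod_cast this
      omega
    have hD2m : poch ((D:ℝ)+2+(m:ℝ)) p ≠ 0 := poch_pos_ne _ (by positivity) p
    rw [e1, e2, e3, e4]
    simp only [poch_one]
    rw [div_mul_div_comm, div_mul_div_comm]
    refine (div_eq_div_iff ?_ ?_).mpr ?_
    · (repeat' apply mul_ne_zero) <;>
        first
          | exact hpD2 m | exact hD2m | exact hpmD m hm' | exact hmD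
          | exact hfac _ | exact hj' | exact hnegmp
    · (repeat' apply mul_ne_zero) <;>
        first
          | exact hpD2 m | exact hD2m | exact hpmD m hm' | exact hmD
          | exact hfac _ | exact hj' | exact hnegmp
    · linear_combination (poch (-(i:ℝ)) m * poch (-(i:ℝ)) m * poch (-(j:ℝ)) m *
        poch (-(j:ℝ)) m * poch ((m:ℝ)-i) p * poch ((m:ℝ)-j) p * poch ((D:ℝ)+2) m *
        poch (-(D:ℝ)) m * (m.factorial:ℝ) * (m.factorial:ℝ) * poch ((D:ℝ)+2+(m:ℝ)) p *
        poch ((m:ℝ)-D) p) * hc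
  -- Step 4 : inner Saalschütz
  have hstep4 : ∀ m ∈ Finset.range (i+1),
      ∑ p ∈ Finset.range (i-m+1), t3 m p = S2 m := by
    intro m hm
    have hm' : m ≤ i := by rw [Finset.mem_range] at hm; omega
    have hz2 : ∀ t : ℕ, (D:ℝ)+2+(m:ℝ) + t ≠ 0 := fun t => by positivity
    have hu2 : ∀ s : ℤ, -((i-m:ℕ):ℤ) ≤ s → s ≤ 1 →
        (m:ℝ)-(j:ℝ) + ((i:ℝ)+(j:ℝ)+1) - ((D:ℝ)+2+(m:ℝ)) + s ≠ 0 := by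
      intro s h1 h2 hc
      have h3 : (((i:ℤ) - D - 1 + s : ℤ) : ℝ) = 0 := by push_cast; linarith
      have h4 : ((i:ℤ) - D - 1 + s) = 0 := by exact_mod_cast h3
      omega
    have hsa := saal ((m:ℝ)-(j:ℝ)) ((i:ℝ)+(j:ℝ)+1) ((D:ℝ)+2+(m:ℝ)) (i-m) hz2 hu2
    rw [show -(((i-m:ℕ)):ℝ) = (m:ℝ)-(i:ℝ) by rw [Nat.cast_sub hm']; ring,
        show (m:ℝ)-(j:ℝ) + ((i:ℝ)+(j:ℝ)+1) + 1 - ((D:ℝ)+2+(m:ℝ)) - (((i-m:ℕ)):ℝ)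
            = (m:ℝ)-(D:ℝ) by rw [Nat.cast_sub hm']; ring,
        show (D:ℝ)+2+(m:ℝ) - ((m:ℝ)-(j:ℝ)) - ((i:ℝ)+(j:ℝ)+1) = (D:ℝ)+1-(i:ℝ) by ring,
        show (D:ℝ)+2+(m:ℝ) - ((m:ℝ)-(j:ℝ)) = (D:ℝ)+(j:ℝ)+2 by ring,
        show (D:ℝ)+2+(m:ℝ) - ((i:ℝ)+(j:ℝ)+1) = (D:ℝ)+(m:ℝ)-(i:ℝ)-(j:ℝ)+1 by ring] at hsa
    simp only [ht3, hS2]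
    exact hsa
  -- Step 5 : pointwise prefactor identification
  have hstep5 : ∀ m ∈ Finset.range (i+1), Am m * S2 m = Cst * lt m := by
    intro m hm
    rw [Finset.mem_range] at hm
    have hm' : m ≤ i := by omega
    by_cases hmj : j < m
    · have hz0 := poch_neg_nat_zero (k := j) (m := m) hmj
      simp [hAm, hlt, hz0]
    push_neg at hmj
    simp only [hAm, hS2, hCst, hlt, poch_one]
    have c1 : poch ((D:ℝ)+(j:ℝ)+2) (i-m)
        = (((D+j+1)+(i-m)).factorial : ℝ) / ((D+j+1).factorial : ℝ) := by
      rw [show (D:ℝ)+(j:ℝ)+2 = ((D+j+1:ℕ):ℝ)+1 by push_cast; ring, poch_nat_eq]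
    have c2 : poch ((D:ℝ)+(m:ℝ)-(i:ℝ)-(j:ℝ)+1) (i-m)
        = (((D+m-(i+j))+(i-m)).factorial : ℝ) / ((D+m-(i+j)).factorial : ℝ) := by
      rw [show (D:ℝ)+(m:ℝ)-(i:ℝ)-(j:ℝ)+1 = ((D+m-(i+j):ℕ):ℝ)+1 by
            rw [Nat.cast_sub (by omega)]; try push_cast; try ring, poch_nat_eq]
    have c3 : poch ((D:ℝ)+2+(m:ℝ)) (i-m)
        = (((D+1+m)+(i-m)).factorial : ℝ) / ((D+1+m).factorial : ℝ) := by
      rw [show (D:ℝ)+2+(m:ℝ) = ((D+1+m:ℕ):ℝ)+1 by push_cast; ring, poch_nat_eq]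
    have c4 : poch ((D:ℝ)+1-(i:ℝ)) (i-m)
        = (((D-i)+(i-m)).factorial : ℝ) / ((D-i).factorial : ℝ) := by
      rw [show (D:ℝ)+1-(i:ℝ) = ((D-i:ℕ):ℝ)+1 by
            rw [Nat.cast_sub (by omega)]; try push_cast; try ring, poch_nat_eq]
    have c5 : poch (-(D:ℝ)-(i:ℝ)-(j:ℝ)-1) m
        = (-1)^m * ((D+i+j+1).factorial : ℝ) / ((D+i+j+1-m).factorial : ℝ) := by
      rw [show -(D:ℝ)-(i:ℝ)-(j:ℝ)-1 = -((D+i+j+1:ℕ):ℝ) by push_cast; ring,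
          poch_neg_eq (by omega)]
    have c6 : poch ((D:ℝ)-(i:ℝ)-(j:ℝ)+1) m
        = (((D-(i+j))+m).factorial : ℝ) / ((D-(i+j)).factorial : ℝ) := by
      rw [show (D:ℝ)-(i:ℝ)-(j:ℝ)+1 = ((D-(i+j):ℕ):ℝ)+1 by
            rw [Nat.cast_sub (by omega)]; try push_cast; try ring, poch_nat_eq]
    have c7 : poch ((D:ℝ)+2) m
        = (((D+1)+m).factorial : ℝ) / ((D+1).factorial : ℝ) := by
      rw [show (D:ℝ)+2 = ((D+1:ℕ):ℝ)+1 by push_cast; ring, poch_nat_eq]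
    have c8 : poch (-(D:ℝ)) m
        = (-1)^m * (D.factorial : ℝ) / ((D-m).factorial : ℝ) :=
      poch_neg_eq (by omega)
    have c9 : poch ((D:ℝ)+(j:ℝ)+2) i
        = (((D+j+1)+i).factorial : ℝ) / ((D+j+1).factorial : ℝ) := by
      rw [show (D:ℝ)+(j:ℝ)+2 = ((D+j+1:ℕ):ℝ)+1 by push_cast; ring, poch_nat_eq]
    have c10 : poch ((j:ℝ)-(D:ℝ)) i
        = (-1)^i * ((D-j).factorial : ℝ) / ((D-j-i).factorial : ℝ) := by
      rw [show (j:ℝ)-(D:ℝ) = -((D-j:ℕ):ℝ) by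
            rw [Nat.cast_sub (by omega)]; try push_cast; try ring,
          poch_neg_eq (by omega)]
    have c11 : poch ((D:ℝ)+2) i
        = (((D+1)+i).factorial : ℝ) / ((D+1).factorial : ℝ) := by
      rw [show (D:ℝ)+2 = ((D+1:ℕ):ℝ)+1 by push_cast; ring, poch_nat_eq]
    have c12 : poch (-(D:ℝ)) i
        = (-1)^i * (D.factorial : ℝ) / ((D-i).factorial : ℝ) :=
      poch_neg_eq (by omega)
    rw [c1, c2, c3, c4, c5, c6, c7, c8, c9, c10, c11, c12]
    rw [show (D+j+1)+(i-m) = D+i+j+1-m by omega,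
        show (D+m-(i+j))+(i-m) = D-j by omega,
        show (D+1+m)+(i-m) = D+1+i by omega,
        show (D-i)+(i-m) = D-m by omega,
        show (D-(i+j))+m = D+m-(i+j) by omega,
        show (D+j+1)+i = D+i+j+1 by omega,
        show D-j-i = D-(i+j) by omega]
    have hm1 : ((-1:ℝ))^m ≠ 0 := by
      apply pow_ne_zero; norm_num
    have hi1' : ((-1:ℝ))^i ≠ 0 := by
      apply pow_ne_zero; norm_num
    field_simp
  -- chain
  have hchain : ∑ k ∈ Finset.range (i+1), rt k = Cst * ∑ m ∈ Finset.range (i+1), lt m := by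
    rw [Finset.sum_congr rfl hstep1]
    have h2 : ∑ k ∈ Finset.range (i+1), ∑ m ∈ Finset.range (k+1), out k * s1 k m
        = ∑ m ∈ Finset.range (i+1), ∑ p ∈ Finset.range (i-m+1), out (m+p) * s1 (m+p) m :=
      sum_tri (fun k m => out k * s1 k m) i
    rw [h2]
    rw [Finset.sum_congr rfl (fun m hm => Finset.sum_congr rfl (hstep3 m hm))]
    rw [Finset.sum_congr rfl (fun m hm => by
      rw [← Finset.mul_sum, hstep4 m hm, hstep5 m hm])]
    rw [← Finset.mul_sum]
  -- prefactor
  have hPC : (poch (-(D : ℝ) - i - 1) i * poch ((D : ℝ) - i + 1) i) /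
          (poch (-(D : ℝ) - i - j - 1) i * poch ((D : ℝ) - i - j + 1) i) * Cst = 1 := by
    simp only [hCst]
    have d1 : poch (-(D:ℝ)-(i:ℝ)-1) i
        = (-1)^i * ((D+i+1).factorial : ℝ) / ((D+i+1-i).factorial : ℝ) := by
      rw [show -(D:ℝ)-(i:ℝ)-1 = -((D+i+1:ℕ):ℝ) by push_cast; ring,
          poch_neg_eq (by omega)]
    have d2 : poch ((D:ℝ)-(i:ℝ)+1) i
        = (((D-i)+i).factorial : ℝ) / ((D-i).factorial : ℝ) := by
      rw [show (D:ℝ)-(i:ℝ)+1 = ((D-i:ℕ):ℝ)+1 by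
            rw [Nat.cast_sub (by omega)]; try push_cast; try ring, poch_nat_eq]
    have d3 : poch (-(D:ℝ)-(i:ℝ)-(j:ℝ)-1) i
        = (-1)^i * ((D+i+j+1).factorial : ℝ) / ((D+i+j+1-i).factorial : ℝ) := by
      rw [show -(D:ℝ)-(i:ℝ)-(j:ℝ)-1 = -((D+i+j+1:ℕ):ℝ) by push_cast; ring,
          poch_neg_eq (by omega)]
    have d4 : poch ((D:ℝ)-(i:ℝ)-(j:ℝ)+1) i
        = (((D-(i+j))+i).factorial : ℝ) / ((D-(i+j)).factorial : ℝ) := by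
      rw [show (D:ℝ)-(i:ℝ)-(j:ℝ)+1 = ((D-(i+j):ℕ):ℝ)+1 by
            rw [Nat.cast_sub (by omega)]; try push_cast; try ring, poch_nat_eq]
    have c9 : poch ((D:ℝ)+(j:ℝ)+2) i
        = (((D+j+1)+i).factorial : ℝ) / ((D+j+1).factorial : ℝ) := by
      rw [show (D:ℝ)+(j:ℝ)+2 = ((D+j+1:ℕ):ℝ)+1 by push_cast; ring, poch_nat_eq]
    have c10 : poch ((j:ℝ)-(D:ℝ)) i
        = (-1)^i * ((D-j).factorial : ℝ) / ((D-j-i).factorial : ℝ) := by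
      rw [show (j:ℝ)-(D:ℝ) = -((D-j:ℕ):ℝ) by
            rw [Nat.cast_sub (by omega)]; try push_cast; try ring,
          poch_neg_eq (by omega)]
    have c11 : poch ((D:ℝ)+2) i
        = (((D+1)+i).factorial : ℝ) / ((D+1).factorial : ℝ) := by
      rw [show (D:ℝ)+2 = ((D+1:ℕ):ℝ)+1 by push_cast; ring, poch_nat_eq]
    have c12 : poch (-(D:ℝ)) i
        = (-1)^i * (D.factorial : ℝ) / ((D-i).factorial : ℝ) :=
      poch_neg_eq (by omega)
    rw [d1, d2, d3, d4, c9, c10, c11, c12]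
    rw [show D+i+1-i = D+1 by omega,
        show (D-i)+i = D by omega,
        show D+i+j+1-i = D+j+1 by omega,
        show (D-(i+j))+i = D-j by omega,
        show (D+j+1)+i = D+i+j+1 by omega,
        show D-j-i = D-(i+j) by omega,
        show (D+1)+i = D+i+1 by omega]
    have hi1' : ((-1:ℝ))^i ≠ 0 := by
      apply pow_ne_zero; norm_num
    field_simp
  rw [hchain, ← mul_assoc, hPC, one_mul]
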